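/- Let x₁,…,x_K ∈ ℝ³ with weights wᵢ ≥ 0 and W = Σᵢ wᵢ > 0, let y₁,…,y_N ∈ ℝ³ be nonzero with weights pⱼ ≥ 0, and let γ ≥ 0. Define the full nonlinear objective f(n,d) = (1/K) Σᵢ wᵢ (⟪xᵢ,n⟫ + d)² + (γ/N) Σⱼ pⱼ (arcsin(‖yⱼ × n‖ / ‖yⱼ‖))² for unit vectors n ∈ ℝ³ and d ∈ ℝ (note ‖yⱼ × n‖ ≤ ‖yⱼ‖ when ‖n‖ = 1, so the arcsine is well-defined). Then f attains its infimum: there exist n* with ‖n*‖ = 1 and d* ∈ ℝ such that f(n*, d*) ≤ f(n, d) for all unit n and all d ∈ ℝ. -/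

import Mathlib

open RealInnerProductSpace Matrix

/-- The cross product on `ℝ³` (with the Euclidean norm). -/
noncomputable def cross3 (a b : EuclideanSpace ℝ (Fin 3)) : EuclideanSpace ℝ (Fin 3) :=
  WithLp.toLp 2 (crossProduct a b)

/-- The full nonlinear midsagittal-plane objective
`f(n,d) = (1/K) ∑ i, w i (⟪x i, n⟫ + d)² + (γ/N) ∑ j, p j (arcsin(‖y j × n‖/‖y j‖))²`. -/
noncomputable def fullObjective (K N : ℕ) (x : Fin K → EuclideanSpace ℝ (Fin 3))
    (w : Fin K → ℝ) (y : Fin N → EuclideanSpace ℝ (Fin 3)) (p : Fin N → ℝ) (γ : ℝ)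
    (n : EuclideanSpace ℝ (Fin 3)) (d : ℝ) : ℝ :=
  (1 / (K : ℝ)) * ∑ i, w i * (⟪x i, n⟫ + d) ^ 2 +
    (γ / (N : ℝ)) * ∑ j, p j * Real.arcsin (‖cross3 (y j) n‖ / ‖y j‖) ^ 2

/-!
For a fixed normal `n` the objective is a quadratic in `d` with leading coefficient
`W / K > 0`, hence minimized at `d = -(∑ wᵢ ⟪xᵢ, n⟫) / W`, which depends continuously on `n`.
Substituting this offset leaves a continuous function on the compact unit sphere; a minimizer
`n*` of it, paired with its optimal offset, minimizes `f`.
-/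

theorem sum_mul_add_sq_eq {ι : Type*} (s : Finset ι) (w a : ι → ℝ) (d : ℝ) :
    ∑ i ∈ s, w i * (a i + d) ^ 2 =
      ∑ i ∈ s, w i * a i ^ 2 + 2 * d * ∑ i ∈ s, w i * a i + (∑ i ∈ s, w i) * d ^ 2 := by
  simp only [Finset.mul_sum, Finset.sum_mul, ← Finset.sum_add_distrib]
  exact Finset.sum_congr rfl fun i _ => by ring

theorem sum_mul_add_neg_weightedMean_sq_le {ι : Type*} (s : Finset ι) (w a : ι → ℝ)
    (hs : 0 < ∑ i ∈ s, w i) (d : ℝ) :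
    ∑ i ∈ s, w i * (a i + -((∑ i ∈ s, w i * a i) / ∑ i ∈ s, w i)) ^ 2 ≤
      ∑ i ∈ s, w i * (a i + d) ^ 2 := by
  rw [sum_mul_add_sq_eq, sum_mul_add_sq_eq]
  set A := ∑ i ∈ s, w i * a i
  set S := ∑ i ∈ s, w i
  have key : S * d ^ 2 + 2 * d * A - (S * (A / S) ^ 2 - 2 * (A / S) * A) =
      S * (d + A / S) ^ 2 := by
    field_simp
    ring
  linarith [mul_nonneg hs.le (sq_nonneg (d + A / S))]

@[fun_prop]
theorem continuous_cross3 (a : EuclideanSpace ℝ (Fin 3)) : Continuous (cross3 a) := by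
  unfold cross3
  fun_prop

section

variable {K N : ℕ} (x : Fin K → EuclideanSpace ℝ (Fin 3)) (w : Fin K → ℝ)
  (y : Fin N → EuclideanSpace ℝ (Fin 3)) (p : Fin N → ℝ) (γ : ℝ)

noncomputable def optimalOffset (n : EuclideanSpace ℝ (Fin 3)) : ℝ :=
  -((∑ i, w i * ⟪x i, n⟫) / ∑ i, w i)

theorem fullObjective_optimalOffset_le (hw : 0 < ∑ i, w i) (n : EuclideanSpace ℝ (Fin 3))
    (d : ℝ) :
    fullObjective K N x w y p γ n (optimalOffset x w n) ≤ fullObjective K N x w y p γ n d := by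
  unfold fullObjective optimalOffset
  gcongr ?_ + _
  exact mul_le_mul_of_nonneg_left
    (sum_mul_add_neg_weightedMean_sq_le _ w (fun i => ⟪x i, n⟫) hw d) (by positivity)

theorem continuous_fullObjective_optimalOffset :
    Continuous fun n => fullObjective K N x w y p γ n (optimalOffset x w n) := by
  unfold fullObjective optimalOffset
  fun_prop

end

theorem full_objective_attains_min_general
    (K N : ℕ) (x : Fin K → EuclideanSpace ℝ (Fin 3)) (w : Fin K → ℝ)
    (W : ℝ) (hW : W = ∑ i, w i) (hWpos : 0 < W)
    (y : Fin N → EuclideanSpace ℝ (Fin 3))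
    (p : Fin N → ℝ) (γ : ℝ) :
    ∃ (nstar : EuclideanSpace ℝ (Fin 3)) (dstar : ℝ), ‖nstar‖ = 1 ∧
      ∀ (n : EuclideanSpace ℝ (Fin 3)) (d : ℝ), ‖n‖ = 1 →
        fullObjective K N x w y p γ nstar dstar ≤ fullObjective K N x w y p γ n d := by
  subst hW
  obtain ⟨nstar, hnstar, hmin⟩ :=
    (isCompact_sphere (0 : EuclideanSpace ℝ (Fin 3)) 1).exists_isMinOn
      (NormedSpace.sphere_nonempty.2 zero_le_one)
      (continuous_fullObjective_optimalOffset x w y p γ).continuousOn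
  refine ⟨nstar, optimalOffset x w nstar, by simpa using hnstar, fun n d hn => ?_⟩
  calc fullObjective K N x w y p γ nstar (optimalOffset x w nstar)
      ≤ fullObjective K N x w y p γ n (optimalOffset x w n) := hmin (by simpa using hn)
    _ ≤ fullObjective K N x w y p γ n d := fullObjective_optimalOffset_le x w y p γ hWpos n d

/-- **Existence of a minimizer for the full nonlinear objective.**  For landmarks `x i`
with nonnegative weights of positive total weight, nonzero vectors `y j` with nonnegative
weights, and `γ ≥ 0`, the objective `f` attains its infimum over pairs `(n, d)` with
`‖n‖ = 1` and `d ∈ ℝ`. -/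
theorem full_objective_attains_min
    (K N : ℕ) (x : Fin K → EuclideanSpace ℝ (Fin 3)) (w : Fin K → ℝ)
    (hw : ∀ i, 0 ≤ w i) (W : ℝ) (hW : W = ∑ i, w i) (hWpos : 0 < W)
    (y : Fin N → EuclideanSpace ℝ (Fin 3)) (hy : ∀ j, y j ≠ 0)
    (p : Fin N → ℝ) (hp : ∀ j, 0 ≤ p j) (γ : ℝ) (hγ : 0 ≤ γ) :
    ∃ (nstar : EuclideanSpace ℝ (Fin 3)) (dstar : ℝ), ‖nstar‖ = 1 ∧
      ∀ (n : EuclideanSpace ℝ (Fin 3)) (d : ℝ), ‖n‖ = 1 →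
        fullObjective K N x w y p γ nstar dstar ≤ fullObjective K N x w y p γ n d :=
  full_objective_attains_min_general K N x w W hW hWpos y p γ
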